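/- The set of values {(2p/(2p+k+1))·√((p+k-1)/p) : p, k ∈ ℕ, p ≥ 1, k ≥ 1} is dense in the interval (0,1). -/

import Mathlib

open Filter Topology

/-- Limit lemma: along `p = b·n`, `k = a·n`, the Kasner ratio tends to
`2b/(2b+a)·√((b+a)/b)`. -/
lemma kasner_aux_tendsto (a b : ℕ) (ha : 1 ≤ a) (hb : 1 ≤ b) :
    Tendsto (fun n : ℕ =>
        2 * ((b : ℝ) * n) / (2 * ((b : ℝ) * n) + (a : ℝ) * n + 1) *
          Real.sqrt (((b : ℝ) * n + (a : ℝ) * n - 1) / ((b : ℝ) * n)))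
      atTop
      (nhds (2 * (b : ℝ) / (2 * b + a) * Real.sqrt (((b : ℝ) + a) / b))) := by
  have ha' : (0 : ℝ) < a := by exact_mod_cast ha
  have hb' : (0 : ℝ) < b := by exact_mod_cast hb
  set F : ℝ → ℝ := fun u =>
    2 * (b : ℝ) / (2 * b + a + u) * Real.sqrt (((b : ℝ) + a - u) / b) with hF
  have hcont : ContinuousAt F 0 := by
    apply ContinuousAt.mul
    · exact continuousAt_const.div (continuousAt_const.add continuousAt_id)
        (by norm_num; linarith)
    · exact Real.continuous_sqrt.continuousAt.comp
        ((continuousAt_const.sub continuousAt_id).div continuousAt_const hb'.ne')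
  have hlim : Tendsto (fun n : ℕ => F (1 / (n : ℝ))) atTop (nhds (F 0)) :=
    hcont.tendsto.comp tendsto_one_div_atTop_nhds_zero_nat
  have hF0 : F 0 = 2 * (b : ℝ) / (2 * b + a) * Real.sqrt (((b : ℝ) + a) / b) := by
    simp [hF]
  rw [hF0] at hlim
  refine hlim.congr' ?_
  filter_upwards [eventually_ge_atTop 1] with n hn
  have hn' : (0 : ℝ) < n := by exact_mod_cast hn
  have hd1 : 2 * (b : ℝ) + a + 1 / n ≠ 0 := by positivity
  have hd2 : 2 * ((b : ℝ) * n) + a * n + 1 ≠ 0 := by positivity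
  have harg : ((b : ℝ) + a - 1 / n) / b = ((b : ℝ) * n + a * n - 1) / (b * n) := by
    field_simp
  simp only [hF]
  rw [harg]
  congr 1
  field_simp

/-- The set of values `{(2p/(2p+k+1))·√((p+k-1)/p) : p, k ∈ ℕ, p ≥ 1, k ≥ 1}`
is dense in the interval `(0,1)`. -/
theorem kasner_irregular_limits_dense (x : ℝ) (hx : x ∈ Set.Ioo (0 : ℝ) 1)
    (ε : ℝ) (hε : 0 < ε) :
    ∃ p k : ℕ, 1 ≤ p ∧ 1 ≤ k ∧
      |(2 * (p : ℝ) / (2 * p + k + 1)) * Real.sqrt (((p : ℝ) + k - 1) / p) - x| < ε := by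
  obtain ⟨hx0, hx1⟩ := hx
  set g : ℝ → ℝ := fun c => 2 * Real.sqrt (1 + c) / (2 + c) with hg
  -- g is continuous on [0, ∞)
  have hgcont : ∀ c : ℝ, 0 ≤ c → ContinuousAt g c := by
    intro c hc
    apply ContinuousAt.div
    · exact continuousAt_const.mul
        (Real.continuous_sqrt.continuousAt.comp (continuousAt_const.add continuousAt_id))
    · exact continuousAt_const.add continuousAt_id
    · positivity
  -- g 0 = 1
  have hg0 : g 0 = 1 := by simp [hg]
  -- choose big C with g C < x
  set C : ℝ := 9 / x ^ 2 with hC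
  have hC1 : (1 : ℝ) ≤ C := by
    rw [hC, le_div_iff₀ (by positivity)]
    nlinarith
  have hgC : g C < x := by
    have hs1 : Real.sqrt (1 + C) ≤ Real.sqrt (2 * C) :=
      Real.sqrt_le_sqrt (by linarith)
    have hsq : Real.sqrt (2 * C) = Real.sqrt 2 * (3 / x) := by
      have : 2 * C = 2 * (3 / x) ^ 2 := by rw [hC]; ring
      rw [this, Real.sqrt_mul (by norm_num), Real.sqrt_sq (by positivity)]
    have h2 : Real.sqrt 2 < 1.5 := by
      nlinarith [Real.sq_sqrt (by norm_num : (0:ℝ) ≤ 2), Real.sqrt_nonneg 2]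
    have hxC : x * C = 9 / x := by rw [hC]; field_simp
    rw [hg, div_lt_iff₀ (by linarith)]
    have : 2 * Real.sqrt (1 + C) ≤ 2 * (Real.sqrt 2 * (3 / x)) := by
      rw [← hsq]; linarith
    have h3 : 2 * (Real.sqrt 2 * (3 / x)) < 9 / x := by
      rw [show 2 * (Real.sqrt 2 * (3 / x)) = 6 * Real.sqrt 2 / x by ring,
        div_lt_div_iff₀ hx0 hx0]
      nlinarith
    nlinarith
  -- IVT: find c ≥ 0 with g c = x
  have hivt : x ∈ g '' Set.Icc 0 C := by
    apply intermediate_value_Icc' (by linarith)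
    · intro y hy
      exact (hgcont y hy.1).continuousWithinAt
    · rw [hg0]; exact ⟨hgC.le, hx1.le⟩
  obtain ⟨c, hcmem, hgc⟩ := hivt
  have hc0 : 0 ≤ c := hcmem.1
  -- continuity at c gives δ
  obtain ⟨δ, hδ0, hδ⟩ := Metric.continuousAt_iff.mp (hgcont c hc0) (ε / 2) (by linarith)
  -- pick a rational in (c, c + δ)
  obtain ⟨q, hq1, hq2⟩ := exists_rat_btwn (show c < c + δ by linarith)
  have hq0 : (0 : ℝ) < q := lt_of_le_of_lt hc0 hq1
  have hgq : |g q - x| < ε / 2 := by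
    have : dist (g q) (g c) < ε / 2 := by
      apply hδ
      rw [Real.dist_eq, abs_of_pos (by linarith)]
      linarith
    rw [Real.dist_eq, hgc] at this
    exact this
  -- write q = a / b with a, b ≥ 1
  have hqpos : 0 < q := by exact_mod_cast hq0
  set a : ℕ := q.num.toNat with hadef
  set b : ℕ := q.den with hbdef
  have hnum : (0 : ℤ) < q.num := Rat.num_pos.mpr hqpos
  have ha : 1 ≤ a := by rw [hadef]; omega
  have hb : 1 ≤ b := q.pos
  have ha' : (0 : ℝ) < a := by
    have : 1 ≤ a := by
      rw [hadef]; omega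
    exact_mod_cast this
  have hb' : (0 : ℝ) < b := by exact_mod_cast hb
  have hab : (a : ℝ) / b = (q : ℝ) := by
    rw [Rat.cast_def, hadef, hbdef]
    congr 1
    rw [← Int.cast_natCast, Int.toNat_of_nonneg hnum.le]
  -- the limit value equals g q
  have hval : 2 * (b : ℝ) / (2 * b + a) * Real.sqrt (((b : ℝ) + a) / b) = g q := by
    rw [hg, ← hab]
    beta_reduce
    have h1 : (1 : ℝ) + (a : ℝ) / b = ((b : ℝ) + a) / b := by field_simp
    have h2 : (2 : ℝ) + (a : ℝ) / b = (2 * b + a) / b := by field_simp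
    rw [h1, h2, div_div_eq_mul_div]
    ring
  -- apply the limit lemma
  have ha1 : 1 ≤ a := by rw [hadef]; omega
  have hlim := kasner_aux_tendsto a b ha1 hb
  rw [hval] at hlim
  rw [Metric.tendsto_atTop] at hlim
  obtain ⟨N, hN⟩ := hlim (ε / 2) (by linarith)
  set n : ℕ := max N 1 with hn
  have hNn : N ≤ n := le_max_left _ _
  have hn1 : 1 ≤ n := le_max_right _ _
  refine ⟨b * n, a * n, Nat.one_le_iff_ne_zero.mpr (by positivity), 
    Nat.one_le_iff_ne_zero.mpr (by positivity), ?_⟩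
  have key := hN n hNn
  rw [Real.dist_eq] at key
  have hcast : (2 * ((b * n : ℕ) : ℝ) / (2 * ((b * n : ℕ) : ℝ) + ((a * n : ℕ) : ℝ) + 1)) *
      Real.sqrt ((((b * n : ℕ) : ℝ) + ((a * n : ℕ) : ℝ) - 1) / ((b * n : ℕ) : ℝ)) =
      2 * ((b : ℝ) * n) / (2 * ((b : ℝ) * n) + (a : ℝ) * n + 1) *
        Real.sqrt (((b : ℝ) * n + (a : ℝ) * n - 1) / ((b : ℝ) * n)) := by
    push_cast
    ring_nf
  rw [hcast]
  calc |2 * ((b : ℝ) * n) / (2 * ((b : ℝ) * n) + (a : ℝ) * n + 1) *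
        Real.sqrt (((b : ℝ) * n + (a : ℝ) * n - 1) / ((b : ℝ) * n)) - x|
      ≤ |2 * ((b : ℝ) * n) / (2 * ((b : ℝ) * n) + (a : ℝ) * n + 1) *
        Real.sqrt (((b : ℝ) * n + (a : ℝ) * n - 1) / ((b : ℝ) * n)) - g q| + |g q - x| :=
        abs_sub_le _ _ _
    _ < ε / 2 + ε / 2 := add_lt_add key hgq
    _ = ε := by ring
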